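/- Under the stated assumptions, if in addition there is a fixed unit vector b ∈ ℝ³ such that B(u,t) = b for all u and t (i.e. the curves evolve in parallel planes perpendicular to b), then the generalized enclosed area A(Γ_t) = ½ ∫₀¹ (X × ∂_u X)·B du satisfies d/dt A(Γ_t) = −∫_{Γ_t} v_N ds = −∫₀¹ v_N(u,t) g(u,t) du. -/

import Mathlib

noncomputable section

open Real

/-- The cross product on `EuclideanSpace ℝ (Fin 3)`. -/
def cross3 (a b : EuclideanSpace ℝ (Fin 3)) : EuclideanSpace ℝ (Fin 3) :=
  (WithLp.equiv 2 (Fin 3 → ℝ)).symm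
    ![a 1 * b 2 - a 2 * b 1, a 2 * b 0 - a 0 * b 2, a 0 * b 1 - a 1 * b 0]

/-- Partial derivative with respect to the first (spatial) variable `u`. -/
def pu {α : Type*} [NormedAddCommGroup α] [NormedSpace ℝ α]
    (f : ℝ × ℝ → α) (p : ℝ × ℝ) : α :=
  deriv (fun u => f (u, p.2)) p.1

/-- Partial derivative with respect to the second (time) variable `t`. -/
def pt {α : Type*} [NormedAddCommGroup α] [NormedSpace ℝ α]
    (f : ℝ × ℝ → α) (p : ℝ × ℝ) : α :=
  deriv (fun t => f (p.1, t)) p.2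

/-- Arc-length derivative `∂_s = g⁻¹ ∂_u` along the curves parametrized by `X`. -/
def Ds (X : ℝ × ℝ → EuclideanSpace ℝ (Fin 3)) {α : Type*}
    [NormedAddCommGroup α] [NormedSpace ℝ α] (f : ℝ × ℝ → α) (p : ℝ × ℝ) : α :=
  ‖pu X p‖⁻¹ • pu f p

namespace PlanarAux

abbrev E3 := EuclideanSpace ℝ (Fin 3)

lemma cross3_comp (a c : E3) (i : Fin 3) :
    cross3 a c i = ![a 1 * c 2 - a 2 * c 1, a 2 * c 0 - a 0 * c 2, a 0 * c 1 - a 1 * c 0] i := rfl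

lemma inner_c3 (x y : E3) : (inner ℝ x y : ℝ) = x 0 * y 0 + x 1 * y 1 + x 2 * y 2 := by
  simp [PiLp.inner_apply, Fin.sum_univ_three]; ring

lemma cross3_add_left (a a' c : E3) : cross3 (a + a') c = cross3 a c + cross3 a' c := by
  ext i; fin_cases i <;> simp [cross3_comp, PiLp.add_apply] <;> ring

lemma cross3_smul_left (r : ℝ) (a c : E3) : cross3 (r • a) c = r • cross3 a c := by
  ext i; fin_cases i <;> simp [cross3_comp, PiLp.smul_apply] <;> ring

lemma cross3_smul_right (r : ℝ) (a c : E3) : cross3 a (r • c) = r • cross3 a c := by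
  ext i; fin_cases i <;> simp [cross3_comp, PiLp.smul_apply] <;> ring

lemma cross3_anticomm (a c : E3) : cross3 a c = -cross3 c a := by
  ext i; fin_cases i <;> simp [cross3_comp] <;> ring

lemma cross3_self (a : E3) : cross3 a a = 0 := by
  ext i; fin_cases i <;> simp [cross3_comp] <;> ring

lemma inner_cross3_self (a c : E3) : (inner ℝ (cross3 a c) a : ℝ) = 0 := by
  simp only [inner_c3, cross3_comp]; simp; ring

def crossl (a : E3) : E3 →L[ℝ] E3 :=
  LinearMap.toContinuousLinearMap
    { toFun := cross3 a
      map_add' := fun x y => by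
        ext i; fin_cases i <;> simp [cross3_comp, PiLp.add_apply] <;> ring
      map_smul' := fun r x => by
        ext i; fin_cases i <;> simp [cross3_comp, PiLp.smul_apply] <;> ring }

def crossL : E3 →L[ℝ] E3 →L[ℝ] E3 :=
  LinearMap.toContinuousLinearMap
    { toFun := crossl
      map_add' := fun x y => by
        apply ContinuousLinearMap.ext; intro c
        exact cross3_add_left x y c
      map_smul' := fun r x => by
        apply ContinuousLinearMap.ext; intro c
        exact cross3_smul_left r x c }

@[simp] lemma crossL_apply (a c : E3) : crossL a c = cross3 a c := rfl

section derivs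

variable {α : Type*} [NormedAddCommGroup α] [NormedSpace ℝ α] {f : ℝ × ℝ → α}

lemma hasDerivAt_slice_u (hf : Differentiable ℝ f) (p : ℝ × ℝ) :
    HasDerivAt (fun u => f (u, p.2)) (fderiv ℝ f p ((1:ℝ), (0:ℝ))) p.1 := by
  have h1 : HasDerivAt (fun u : ℝ => (u, p.2)) ((1:ℝ), (0:ℝ)) p.1 :=
    (hasDerivAt_id _).prodMk (hasDerivAt_const _ _)
  have h2 := (hf p).hasFDerivAt.comp_hasDerivAt p.1 (by simpa using h1)
  simpa [Function.comp_def] using h2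

lemma hasDerivAt_slice_t (hf : Differentiable ℝ f) (p : ℝ × ℝ) :
    HasDerivAt (fun t => f (p.1, t)) (fderiv ℝ f p ((0:ℝ), (1:ℝ))) p.2 := by
  have h1 : HasDerivAt (fun t : ℝ => (p.1, t)) ((0:ℝ), (1:ℝ)) p.2 :=
    (hasDerivAt_const _ _).prodMk (hasDerivAt_id _)
  have h2 := (hf p).hasFDerivAt.comp_hasDerivAt p.2 (by simpa using h1)
  simpa [Function.comp_def] using h2

lemma pu_eq (hf : Differentiable ℝ f) (p : ℝ × ℝ) :
    pu f p = fderiv ℝ f p ((1:ℝ), (0:ℝ)) := (hasDerivAt_slice_u hf p).deriv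

lemma pt_eq (hf : Differentiable ℝ f) (p : ℝ × ℝ) :
    pt f p = fderiv ℝ f p ((0:ℝ), (1:ℝ)) := (hasDerivAt_slice_t hf p).deriv

lemma hasDerivAt_pu (hf : Differentiable ℝ f) (p : ℝ × ℝ) :
    HasDerivAt (fun u => f (u, p.2)) (pu f p) p.1 := by
  rw [pu_eq hf]; exact hasDerivAt_slice_u hf p

lemma hasDerivAt_pt (hf : Differentiable ℝ f) (p : ℝ × ℝ) :
    HasDerivAt (fun t => f (p.1, t)) (pt f p) p.2 := by
  rw [pt_eq hf]; exact hasDerivAt_slice_t hf p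

lemma contDiff_pu (hf : ContDiff ℝ (⊤ : ℕ∞) f) : ContDiff ℝ (⊤ : ℕ∞) (pu f) := by
  have h : pu f = fun p => fderiv ℝ f p ((1:ℝ), (0:ℝ)) :=
    funext fun p => pu_eq (hf.differentiable (by simp)) p
  rw [h]; exact (hf.fderiv_right (by simp)).clm_apply contDiff_const

lemma contDiff_pt (hf : ContDiff ℝ (⊤ : ℕ∞) f) : ContDiff ℝ (⊤ : ℕ∞) (pt f) := by
  have h : pt f = fun p => fderiv ℝ f p ((0:ℝ), (1:ℝ)) :=
    funext fun p => pt_eq (hf.differentiable (by simp)) p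
  rw [h]; exact (hf.fderiv_right (by simp)).clm_apply contDiff_const

lemma clairaut (hf : ContDiff ℝ (⊤ : ℕ∞) f) (p : ℝ × ℝ) : pt (pu f) p = pu (pt f) p := by
  set f' := fderiv ℝ f with hf'def
  have hdf : ∀ y, HasFDerivAt f (f' y) y := fun y => (hf.differentiable (by simp) y).hasFDerivAt
  have hcf' : ContDiff ℝ (⊤ : ℕ∞) f' := hf.fderiv_right (by simp)
  have hdf'' : HasFDerivAt f' (fderiv ℝ f' p) p := (hcf'.differentiable (by simp) p).hasFDerivAt
  have sym := second_derivative_symmetric hdf hdf'' ((0:ℝ),(1:ℝ)) ((1:ℝ),(0:ℝ))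
  have hpu : pu f = fun q => f' q ((1:ℝ), (0:ℝ)) :=
    funext fun q => pu_eq (hf.differentiable (by simp)) q
  have hpt : pt f = fun q => f' q ((0:ℝ), (1:ℝ)) :=
    funext fun q => pt_eq (hf.differentiable (by simp)) q
  have h1 : HasFDerivAt (fun q => f' q ((1:ℝ), (0:ℝ)))
      (((f' p).comp 0) + (fderiv ℝ f' p).flip ((1:ℝ),(0:ℝ))) p :=
    hdf''.clm_apply (hasFDerivAt_const _ _)
  have h2 : HasFDerivAt (fun q => f' q ((0:ℝ), (1:ℝ)))
      (((f' p).comp 0) + (fderiv ℝ f' p).flip ((0:ℝ),(1:ℝ))) p :=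
    hdf''.clm_apply (hasFDerivAt_const _ _)
  have e1 : pt (pu f) p = fderiv ℝ f' p ((0:ℝ),(1:ℝ)) ((1:ℝ),(0:ℝ)) := by
    rw [pt_eq (by rw [hpu]; exact ((hcf'.clm_apply contDiff_const).differentiable (by simp))) p,
      hpu, h1.fderiv]
    simp
  have e2 : pu (pt f) p = fderiv ℝ f' p ((1:ℝ),(0:ℝ)) ((0:ℝ),(1:ℝ)) := by
    rw [pu_eq (by rw [hpt]; exact ((hcf'.clm_apply contDiff_const).differentiable (by simp))) p,
      hpt, h2.fderiv]
    simp
  rw [e1, e2, sym]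

end derivs

/-- differentiation under the interval integral for nice integrands -/
lemma hasDerivAt_parametric (f f' : ℝ × ℝ → ℝ) (hf : Continuous f) (hf' : Continuous f')
    (hd : ∀ p : ℝ × ℝ, HasDerivAt (fun t => f (p.1, t)) (f' p) p.2) (t₀ : ℝ) :
    HasDerivAt (fun t => ∫ u in (0:ℝ)..1, f (u, t)) (∫ u in (0:ℝ)..1, f' (u, t₀)) t₀ := by
  obtain ⟨C, hC⟩ := (isCompact_Icc (a := (0:ℝ)) (b := 1)).prod
    (isCompact_Icc (a := t₀ - 1) (b := t₀ + 1)) |>.exists_bound_of_continuousOn hf'.continuousOn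
  have h := intervalIntegral.hasDerivAt_integral_of_dominated_loc_of_deriv_le
      (μ := MeasureTheory.volume)
      (F := fun t u => f (u, t)) (F' := fun t u => f' (u, t)) (x₀ := t₀)
      (a := 0) (b := 1) (bound := fun _ => C) (s := Metric.ball t₀ 1) (Metric.ball_mem_nhds t₀ one_pos)
      (Filter.Eventually.of_forall fun t =>
        (hf.comp (continuous_id.prodMk continuous_const)).aestronglyMeasurable)
      ((hf.comp (continuous_id.prodMk continuous_const)).intervalIntegrable 0 1)
      (hf'.comp (continuous_id.prodMk continuous_const)).aestronglyMeasurable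
      (Filter.Eventually.of_forall fun u hu t ht => by
        apply hC
        constructor
        · exact ⟨le_of_lt (Set.mem_Ioc.mp (by simpa [Set.uIoc_of_le] using hu)).1,
            (Set.mem_Ioc.mp (by simpa [Set.uIoc_of_le] using hu)).2⟩
        · have := Metric.mem_ball.mp ht
          rw [Real.dist_eq] at this
          constructor <;> [linarith [neg_abs_le (t - t₀)]; linarith [le_abs_self (t - t₀)]])
      (intervalIntegrable_const)
      (Filter.Eventually.of_forall fun u _ t _ => hd (u, t))
  exact h.2

lemma cont_cross_inner {Y Z : ℝ × ℝ → E3} (hY : ContDiff ℝ (⊤ : ℕ∞) Y) (hZ : ContDiff ℝ (⊤ : ℕ∞) Z)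
    (b : E3) : Continuous fun p => (inner ℝ (cross3 (Y p) (Z p)) b : ℝ) := by
  have h : ContDiff ℝ (⊤ : ℕ∞) fun p => (inner ℝ (crossL (Y p) (Z p)) b : ℝ) :=
    ContDiff.inner ℝ ((crossL.contDiff.comp hY).clm_apply hZ) contDiff_const
  simpa using h.continuous

end PlanarAux

open PlanarAux

theorem planar_area_evolution
    (X : ℝ × ℝ → EuclideanSpace ℝ (Fin 3)) (vN vB vT : ℝ × ℝ → ℝ)
    (g κ τ : ℝ × ℝ → ℝ) (T N B : ℝ × ℝ → EuclideanSpace ℝ (Fin 3))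
    (hX : ContDiff ℝ (⊤ : ℕ∞) X) (hXper : ∀ u t : ℝ, X (u + 1, t) = X (u, t))
    (hvN : ContDiff ℝ (⊤ : ℕ∞) vN) (hvNper : ∀ u t : ℝ, vN (u + 1, t) = vN (u, t))
    (hvB : ContDiff ℝ (⊤ : ℕ∞) vB) (hvBper : ∀ u t : ℝ, vB (u + 1, t) = vB (u, t))
    (hvT : ContDiff ℝ (⊤ : ℕ∞) vT) (hvTper : ∀ u t : ℝ, vT (u + 1, t) = vT (u, t))
    (hg : ∀ p : ℝ × ℝ, g p = ‖pu X p‖) (hgpos : ∀ p : ℝ × ℝ, 0 < g p)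
    (hT : ∀ p : ℝ × ℝ, T p = Ds X X p)
    (hκ : ∀ p : ℝ × ℝ, κ p = ‖Ds X T p‖) (hκpos : ∀ p : ℝ × ℝ, 0 < κ p)
    (hN : ∀ p : ℝ × ℝ, N p = (κ p)⁻¹ • Ds X T p)
    (hB : ∀ p : ℝ × ℝ, B p = cross3 (T p) (N p))
    (hτ : ∀ p : ℝ × ℝ, τ p = -(inner ℝ (Ds X B p) (N p) : ℝ))
    (hflow : ∀ p : ℝ × ℝ, pt X p = vN p • N p + vB p • B p + vT p • T p)
    (A : ℝ → ℝ)
    (hA : ∀ t : ℝ, A t = (1/2) * ∫ u in (0:ℝ)..1,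
        (inner ℝ (cross3 (X (u, t)) (pu X (u, t))) (B (u, t)) : ℝ))
    (b : EuclideanSpace ℝ (Fin 3)) (hb : ‖b‖ = 1)
    (hBconst : ∀ p : ℝ × ℝ, B p = b) :
    ∀ t : ℝ,
      HasDerivAt A (-(∫ u in (0:ℝ)..1, vN (u, t) * g (u, t))) t := by
  intro t₀
  have hXd : Differentiable ℝ X := hX.differentiable (by simp)
  have hpuX : ContDiff ℝ (⊤ : ℕ∞) (pu X) := contDiff_pu hX
  have hptX : ContDiff ℝ (⊤ : ℕ∞) (pt X) := contDiff_pt hX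
  set F : ℝ × ℝ → ℝ := fun p => inner ℝ (cross3 (X p) (pu X p)) b with hFdef
  set F' : ℝ × ℝ → ℝ :=
    fun p => (inner ℝ (cross3 (pt X p) (pu X p) + cross3 (X p) (pt (pu X) p)) b : ℝ) with hF'def
  have hAfun : A = fun t => (1/2) * ∫ u in (0:ℝ)..1, F (u, t) := by
    funext t; rw [hA]
    congr 1
    apply intervalIntegral.integral_congr
    intro u _
    show (inner ℝ (cross3 (X (u, t)) (pu X (u, t))) (B (u, t)) : ℝ) =
      inner ℝ (cross3 (X (u, t)) (pu X (u, t))) b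
    rw [hBconst]
  -- continuity
  have hcF : Continuous F := cont_cross_inner hX hpuX b
  have hcF' : Continuous F' := by
    have h1 := cont_cross_inner hptX hpuX b
    have h2 := cont_cross_inner hX (contDiff_pt hpuX) b
    have : F' = fun p => (inner ℝ (cross3 (pt X p) (pu X p)) b : ℝ) +
        (inner ℝ (cross3 (X p) (pt (pu X) p)) b : ℝ) := by
      funext p; simp only [hF'def, inner_add_left]
    rw [this]; exact h1.add h2
  -- derivative of t-slices
  have hd : ∀ p : ℝ × ℝ, HasDerivAt (fun t => F (p.1, t)) (F' p) p.2 := by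
    intro p
    have h1 : HasDerivAt (fun t => crossL (X (p.1, t))) (crossL (pt X p)) p.2 :=
      crossL.hasFDerivAt.comp_hasDerivAt p.2 (hasDerivAt_pt hXd p)
    have h2 : HasDerivAt (fun t => pu X (p.1, t)) (pt (pu X) p) p.2 :=
      hasDerivAt_pt (hpuX.differentiable (by simp)) p
    have h3 := h1.clm_apply h2
    have h4 := h3.inner ℝ (hasDerivAt_const p.2 b)
    simp only [crossL_apply, Prod.mk.eta, inner_zero_right, zero_add, add_zero] at h4
    rw [hFdef, hF'def]
    convert h4 using 1
  -- the pointwise algebraic identity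
  have hpuT : ∀ p : ℝ × ℝ, pu X p = g p • T p := by
    intro p
    rw [hT p]
    show pu X p = g p • (‖pu X p‖⁻¹ • pu X p)
    rw [← hg p, smul_smul, mul_inv_cancel₀ (ne_of_gt (hgpos p)), one_smul]
  have key : ∀ p : ℝ × ℝ, (inner ℝ (cross3 (pt X p) (pu X p)) b : ℝ) = -(vN p * g p) := by
    intro p
    have hTN : cross3 (T p) (N p) = b := by rw [← hB p, hBconst]
    have hbb : (inner ℝ b b : ℝ) = 1 := by
      rw [real_inner_self_eq_norm_mul_norm, hb]; norm_num
    rw [hflow p, hpuT p, cross3_smul_right, cross3_add_left, cross3_add_left,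
      cross3_smul_left, cross3_smul_left, cross3_smul_left, real_inner_smul_left,
      inner_add_left, inner_add_left, real_inner_smul_left, real_inner_smul_left,
      real_inner_smul_left]
    have e1 : (inner ℝ (cross3 (N p) (T p)) b : ℝ) = -1 := by
      rw [cross3_anticomm, inner_neg_left, hTN, hbb]
    have e2 : (inner ℝ (cross3 (B p) (T p)) b : ℝ) = 0 := by
      rw [hBconst]; exact inner_cross3_self b (T p)
    have e3 : (inner ℝ (cross3 (T p) (T p)) b : ℝ) = 0 := by
      rw [cross3_self]; exact inner_zero_left b
    rw [e1, e2, e3]; ring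
  -- integration by parts over the period
  have hptXd : Differentiable ℝ (pt X) := hptX.differentiable (by simp)
  have hφ : ∀ u : ℝ, HasDerivAt (fun u' => (inner ℝ (cross3 (X (u', t₀)) (pt X (u', t₀))) b : ℝ))
      ((inner ℝ (cross3 (pu X (u, t₀)) (pt X (u, t₀)) +
        cross3 (X (u, t₀)) (pu (pt X) (u, t₀))) b : ℝ)) u := by
    intro u
    have h1 : HasDerivAt (fun u' => crossL (X (u', t₀))) (crossL (pu X (u, t₀))) u :=
      crossL.hasFDerivAt.comp_hasDerivAt u (hasDerivAt_pu hXd (u, t₀))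
    have h2 : HasDerivAt (fun u' => pt X (u', t₀)) (pu (pt X) (u, t₀)) u :=
      hasDerivAt_pu hptXd (u, t₀)
    have h3 := (h1.clm_apply h2).inner ℝ (hasDerivAt_const u b)
    simp only [crossL_apply, inner_zero_right, zero_add, add_zero] at h3
    convert h3 using 1
  have hcφ' : Continuous fun u : ℝ => (inner ℝ (cross3 (pu X (u, t₀)) (pt X (u, t₀)) +
      cross3 (X (u, t₀)) (pu (pt X) (u, t₀))) b : ℝ) := by
    have h1 := (cont_cross_inner hpuX hptX b).comp
      (continuous_id.prodMk (continuous_const : Continuous fun _ : ℝ => t₀))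
    have h2 := (cont_cross_inner hX (contDiff_pu hptX) b).comp
      (continuous_id.prodMk (continuous_const : Continuous fun _ : ℝ => t₀))
    have : (fun u : ℝ => (inner ℝ (cross3 (pu X (u, t₀)) (pt X (u, t₀)) +
        cross3 (X (u, t₀)) (pu (pt X) (u, t₀))) b : ℝ)) =
        (fun u : ℝ => (inner ℝ (cross3 (pu X (u, t₀)) (pt X (u, t₀))) b : ℝ) +
          (inner ℝ (cross3 (X (u, t₀)) (pu (pt X) (u, t₀))) b : ℝ)) := by
      funext u; rw [inner_add_left]
    rw [this]; exact h1.add h2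
  have hper0 : X (1, t₀) = X (0, t₀) := by
    have := hXper 0 t₀; rwa [zero_add] at this
  have hptper : pt X (1, t₀) = pt X (0, t₀) := by
    show deriv (fun t => X (1, t)) t₀ = deriv (fun t => X (0, t)) t₀
    congr 1
    funext t
    have := hXper 0 t; rwa [zero_add] at this
  have hibp : (∫ u in (0:ℝ)..1, (inner ℝ (cross3 (pu X (u, t₀)) (pt X (u, t₀)) +
      cross3 (X (u, t₀)) (pu (pt X) (u, t₀))) b : ℝ)) = 0 := by
    rw [intervalIntegral.integral_eq_sub_of_hasDerivAt (fun u _ => hφ u)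
      (hcφ'.intervalIntegrable 0 1)]
    rw [hper0, hptper, sub_self]
  -- split and combine integrals
  have hi1 : IntervalIntegrable (fun u : ℝ =>
      (inner ℝ (cross3 (pu X (u, t₀)) (pt X (u, t₀))) b : ℝ)) MeasureTheory.volume 0 1 :=
    ((cont_cross_inner hpuX hptX b).comp
      (continuous_id.prodMk continuous_const)).intervalIntegrable 0 1
  have hi2 : IntervalIntegrable (fun u : ℝ =>
      (inner ℝ (cross3 (X (u, t₀)) (pu (pt X) (u, t₀))) b : ℝ)) MeasureTheory.volume 0 1 :=
    ((cont_cross_inner hX (contDiff_pu hptX) b).comp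
      (continuous_id.prodMk continuous_const)).intervalIntegrable 0 1
  have hsplit : (∫ u in (0:ℝ)..1, (inner ℝ (cross3 (pu X (u, t₀)) (pt X (u, t₀)) +
      cross3 (X (u, t₀)) (pu (pt X) (u, t₀))) b : ℝ)) =
      (∫ u in (0:ℝ)..1, (inner ℝ (cross3 (pu X (u, t₀)) (pt X (u, t₀))) b : ℝ)) +
      (∫ u in (0:ℝ)..1, (inner ℝ (cross3 (X (u, t₀)) (pu (pt X) (u, t₀))) b : ℝ)) := by
    rw [← intervalIntegral.integral_add hi1 hi2]
    apply intervalIntegral.integral_congr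
    intro u _
    simp only [inner_add_left]
  -- value of the derivative integral
  have hval : (∫ u in (0:ℝ)..1, F' (u, t₀)) = -(2 * ∫ u in (0:ℝ)..1, vN (u, t₀) * g (u, t₀)) := by
    have hFe : ∀ u : ℝ, F' (u, t₀) =
        (inner ℝ (cross3 (pu X (u, t₀)) (pt X (u, t₀))) b : ℝ) * (-1) +
        (inner ℝ (cross3 (X (u, t₀)) (pu (pt X) (u, t₀))) b : ℝ) := by
      intro u
      rw [hF'def]
      show (inner ℝ (cross3 (pt X (u, t₀)) (pu X (u, t₀)) +
        cross3 (X (u, t₀)) (pt (pu X) (u, t₀))) b : ℝ) = _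
      rw [inner_add_left, clairaut hX (u, t₀), cross3_anticomm (pt X (u, t₀)), inner_neg_left]
      ring
    have heq : (∫ u in (0:ℝ)..1, F' (u, t₀)) =
        (∫ u in (0:ℝ)..1, (inner ℝ (cross3 (pu X (u, t₀)) (pt X (u, t₀))) b : ℝ) * (-1)) +
        (∫ u in (0:ℝ)..1, (inner ℝ (cross3 (X (u, t₀)) (pu (pt X) (u, t₀))) b : ℝ)) := by
      rw [← intervalIntegral.integral_add (hi1.mul_const _) hi2]
      apply intervalIntegral.integral_congr
      intro u _
      exact hFe u
    have h2 : (∫ u in (0:ℝ)..1, (inner ℝ (cross3 (X (u, t₀)) (pu (pt X) (u, t₀))) b : ℝ)) =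
        -(∫ u in (0:ℝ)..1, (inner ℝ (cross3 (pu X (u, t₀)) (pt X (u, t₀))) b : ℝ)) := by
      have := hibp
      rw [hsplit] at this
      linarith
    have h3 : (∫ u in (0:ℝ)..1, (inner ℝ (cross3 (pu X (u, t₀)) (pt X (u, t₀))) b : ℝ)) =
        ∫ u in (0:ℝ)..1, vN (u, t₀) * g (u, t₀) := by
      apply intervalIntegral.integral_congr
      intro u _
      have := key (u, t₀)
      rw [cross3_anticomm (pt X (u, t₀)), inner_neg_left] at this
      show (inner ℝ (cross3 (pu X (u, t₀)) (pt X (u, t₀))) b : ℝ) = vN (u, t₀) * g (u, t₀)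
      linarith
    rw [heq, intervalIntegral.integral_mul_const, h2, h3]
    ring
  have hder := hasDerivAt_parametric F F' hcF hcF' hd t₀
  rw [hval] at hder
  have := hder.const_mul (1/2 : ℝ)
  rw [← hAfun] at this
  convert this using 1
  · rfl
  · rfl
  · ring
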